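/- In Ban, let S consist of the isometries between separable Banach spaces. Then every morphism f ∈ Po(S) is a pushout of some isometry s between separable Banach spaces along an isometry u; that is, there is a pushout square with left vertical arrow s ∈ S, bottom-left vertex mapped into the domain of f by an isometry u, and f as the induced cobase change. -/

import Mathlib

universe v u

open CategoryTheory CategoryTheory.Limits

namespace Paper

variable {K : Type u} [Category.{v} K]

/-- A preorder is `κ`-directed if every subset of cardinality `< κ` has an upper bound. -/
def IsCardinalDirected (P : Type v) [Preorder P] (κ : Cardinal.{v}) : Prop :=
  ∀ S : Set P, Cardinal.mk S < κ → ∃ x : P, ∀ y ∈ S, y ≤ x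

/-- An object `A` is `κ`-presentable: its hom-functor preserves `κ`-directed colimits. -/
def IsPresentable (κ : Cardinal.{v}) (A : K) : Prop :=
  ∀ (P : Type v) [Preorder P], IsCardinalDirected P κ →
    ∀ (D : P ⥤ K) (c : Cocone D), IsColimit c →
      (∀ h : A ⟶ c.pt, ∃ (x : P) (g : A ⟶ D.obj x), g ≫ c.ι.app x = h) ∧
      (∀ (x : P) (g g' : A ⟶ D.obj x), g ≫ c.ι.app x = g' ≫ c.ι.app x →
        ∃ (y : P) (hxy : x ≤ y), g ≫ D.map (homOfLE hxy) = g' ≫ D.map (homOfLE hxy))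

/-- `K` is a locally `λ`-presentable category: it is cocomplete and there is a set of
`λ`-presentable objects such that every object is a `λ`-directed colimit of objects
from this set. -/
def IsLocallyPresentable (K : Type u) [Category.{v} K] (lam : Cardinal.{v}) : Prop :=
  HasColimitsOfSize.{v, v} K ∧
  ∃ (ι : Type v) (G : ι → K), (∀ i, IsPresentable lam (G i)) ∧
    ∀ X : K, ∃ (P : Type v) (ip : Preorder P),
      letI := ip
      IsCardinalDirected P lam ∧
      ∃ (D : P ⥤ K), (∀ p : P, ∃ i : ι, Nonempty (D.obj p ≅ G i)) ∧
        ∃ (c : Cocone D), Nonempty (IsColimit c) ∧ Nonempty (c.pt ≅ X)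

/-- There is a representative set of `λ`-presentable objects of cardinality at most `κ`. -/
def PresentablesCardLE (K : Type u) [Category.{v} K] (lam κ : Cardinal.{v}) : Prop :=
  ∃ (ι : Type v) (G : ι → K), Cardinal.mk ι ≤ κ ∧
    ∀ X : K, IsPresentable lam X → ∃ i : ι, Nonempty (X ≅ G i)

/-- `Po X`: the class of all pushouts (cobase changes) of morphisms from `X`. -/
def Po (X : MorphismProperty K) : MorphismProperty K :=
  fun _ _ f => ∃ (C D : K) (u : C ⟶ _) (s : C ⟶ D) (v : D ⟶ _),
    X s ∧ IsPushout u s f v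

/-- `Po_λ X`: pushouts of morphisms from `X` with `λ`-presentable domain and codomain. -/
def PoPres (lam : Cardinal.{v}) (X : MorphismProperty K) : MorphismProperty K :=
  fun _ _ f => ∃ (C D : K) (u : C ⟶ _) (s : C ⟶ D) (v : D ⟶ _),
    X s ∧ IsPresentable lam C ∧ IsPresentable lam D ∧ IsPushout u s f v

/-- Ordinals `≤ γ`, the shape of a transfinite chain of length `γ`. -/
abbrev ChainIndex (γ : Ordinal.{v}) := {i : Ordinal.{v} // i ≤ γ}

def chainBot (γ : Ordinal.{v}) : ChainIndex γ := ⟨0, (zero_le : 0 ≤ γ)⟩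

def chainTop (γ : Ordinal.{v}) : ChainIndex γ := ⟨γ, le_refl γ⟩

/-- The canonical cocone with apex `D x` on the restriction of `D` to a subset `Q`
of elements `≤ x`. -/
@[simps]
def subCocone {P : Type*} [Preorder P] (D : P ⥤ K) (Q : Set P) (x : P)
    (hx : ∀ q : Q, (q : P) ≤ x) :
    Cocone ((Subtype.mono_coe (· ∈ Q)).functor ⋙ D) where
  pt := D.obj x
  ι :=
    { app := fun q => D.map (homOfLE (hx q))
      naturality := fun q q' h => by
        simp only [Functor.const_obj_map, Functor.comp_map, ← D.map_comp]
        exact (Category.comp_id _).symm }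

/-- A chain `F : ChainIndex γ ⥤ K` is smooth if at every limit ordinal `j ≤ γ` the
canonical cocone of the restriction to `{i | i < j}` is a colimit cocone. -/
def IsSmoothChain {γ : Ordinal.{v}} (F : ChainIndex γ ⥤ K) : Prop :=
  ∀ j : ChainIndex γ, Order.IsSuccLimit j.1 →
    Nonempty (IsColimit (subCocone F (Set.Iio j) j (fun q => le_of_lt q.2)))

/-- `f` is a transfinite composition of length `γ` of morphisms from `X`: the composite
of a smooth chain of length `γ` all of whose successor steps lie in `X`. -/
def IsTransfiniteCompositionOfLength (X : MorphismProperty K) (γ : Ordinal.{v})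
    {A B : K} (f : A ⟶ B) : Prop :=
  ∃ F : ChainIndex γ ⥤ K, IsSmoothChain F ∧
    (∀ (i : ChainIndex γ) (hi : i.1 < γ),
      X (F.map (homOfLE (show i ≤ ⟨Order.succ i.1, Order.succ_le_of_lt hi⟩ from
        Order.le_succ i.1)))) ∧
    ∃ (e₀ : F.obj (chainBot γ) ≅ A) (e₁ : F.obj (chainTop γ) ≅ B),
      e₀.inv ≫ F.map (homOfLE (show chainBot γ ≤ chainTop γ from (zero_le : 0 ≤ γ))) ≫
        e₁.hom = f

/-- `Tc X`: the class of transfinite compositions of morphisms from `X`. -/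
def Tc (X : MorphismProperty K) : MorphismProperty K :=
  fun _ _ f => ∃ γ : Ordinal.{v}, IsTransfiniteCompositionOfLength X γ f

/-- `κ`-`Tc X`: transfinite compositions of length `< κ`. -/
def TcLT (κ : Cardinal.{v}) (X : MorphismProperty K) : MorphismProperty K :=
  fun _ _ f => ∃ γ : Ordinal.{v}, γ < κ.ord ∧ IsTransfiniteCompositionOfLength X γ f

/-- `cell X = Tc (Po X)`: the class of `X`-cellular morphisms. -/
def Cell (X : MorphismProperty K) : MorphismProperty K := Tc (Po X)

/-- The morphisms with the right lifting property w.r.t. every morphism of `X`. -/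
def Rlp (X : MorphismProperty K) : MorphismProperty K :=
  fun _ _ g => ∀ ⦃A B : K⦄ (f : A ⟶ B), X f → HasLiftingProperty f g

/-- The morphisms with the left lifting property w.r.t. every morphism of `X`. -/
def Llp (X : MorphismProperty K) : MorphismProperty K :=
  fun _ _ f => ∀ ⦃A B : K⦄ (g : A ⟶ B), X g → HasLiftingProperty f g

/-- `cof X`: retracts of `X`-cellular morphisms in comma categories `K\𝒦`,
i.e. retracts in the under-category of the common domain. -/
def Cof (X : MorphismProperty K) : MorphismProperty K :=
  fun _ _ f => ∃ (C : K) (g : _ ⟶ C), Cell X g ∧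
    ∃ (i : _ ⟶ C) (r : C ⟶ _), f ≫ i = g ∧ g ≫ r = f ∧ i ≫ r = 𝟙 _

/-- A (proper) factorization system `(E, M)`: `E` consists of epimorphisms, `M` of
monomorphisms, `M = E^□`, `E = ^□M` and every morphism factors as `m ∘ e`. -/
structure IsFactorizationSystem (E M : MorphismProperty K) : Prop where
  epi : ∀ ⦃A B : K⦄ (f : A ⟶ B), E f → Epi f
  mono : ∀ ⦃A B : K⦄ (f : A ⟶ B), M f → Mono f
  rlp : M = Rlp E
  llp : E = Llp M
  factor : ∀ ⦃A B : K⦄ (f : A ⟶ B), ∃ (C : K) (e : A ⟶ C) (m : C ⟶ B),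
    E e ∧ M m ∧ e ≫ m = f

/-- `M` is special: it is the right class of a factorization system and `cell M = M`. -/
def IsSpecial (M : MorphismProperty K) : Prop :=
  (∃ E : MorphismProperty K, IsFactorizationSystem E M) ∧ Cell M = M

/-- `S ⊆ M` is `λ`-special: (S1) `S ⊆ M_λ`; (S2) `S` contains all isomorphisms between
`λ`-presentable objects; (S3) `λ`-`Tc (Po_λ S) = S`; (S4) the cancellation property. -/
structure IsLambdaSpecial (lam : Cardinal.{v}) (M S : MorphismProperty K) : Prop where
  le : ∀ ⦃A B : K⦄ (f : A ⟶ B), S f → M f ∧ IsPresentable lam A ∧ IsPresentable lam B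
  iso : ∀ ⦃A B : K⦄ (f : A ⟶ B), IsIso f →
    IsPresentable lam A → IsPresentable lam B → S f
  tc : TcLT lam (PoPres lam S) = S
  cancel : ∀ ⦃A B C : K⦄ (f : A ⟶ B) (g : B ⟶ C),
    Po S (f ≫ g) → Po S f → M g → Po S g

/-- `(M, S)` is a `λ`-special pair. -/
def IsSpecialPair (lam : Cardinal.{v}) (M S : MorphismProperty K) : Prop :=
  IsSpecial M ∧ IsLambdaSpecial lam M S

/-- `X` is `(S,M,κ)`-injective: every `M`-morphism `A → X` with `A` `κ`-presentable
extends along every `Po S`-morphism `A → B` via an `M`-morphism `B → X`. -/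
def IsSMInjective (S M : MorphismProperty K) (κ : Cardinal.{v}) (X : K) : Prop :=
  ∀ ⦃A B : K⦄ (f : A ⟶ B), Po S f → IsPresentable κ A →
    ∀ g : A ⟶ X, M g → ∃ h : B ⟶ X, M h ∧ f ≫ h = g

/-- `X` is an `S`-cellular object: the unique morphism from the initial object is
`S`-cellular. -/
def IsCellularObject (S : MorphismProperty K) (X : K) : Prop :=
  ∃ (O : K) (_ : IsInitial O) (f : O ⟶ X), Cell S f

/-- `X` has size `κ`: its presentability rank is the successor `κ⁺`. -/
def HasSize (κ : Cardinal.{v}) (X : K) : Prop :=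
  IsPresentable (Order.succ κ) X ∧
  ∀ μ : Cardinal.{v}, μ.IsRegular → μ < Order.succ κ → ¬ IsPresentable μ X

/-- `M` is closed under directed colimits (in the arrow category). -/
def ClosedUnderDirectedColimits (M : MorphismProperty K) : Prop :=
  ∀ (P : Type v) (ip : Preorder P),
    letI := ip
    ∀ (_ : IsDirected P (· ≤ ·)) (D₁ D₂ : P ⥤ K) (η : D₁ ⟶ D₂)
      (c₁ : Cocone D₁) (c₂ : Cocone D₂) (h₁ : IsColimit c₁) (_ : IsColimit c₂),
      (∀ p : P, M (η.app p)) →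
      M (h₁.desc (Cocone.mk c₂.pt (η ≫ c₂.ι)))

/-- The class of regular monomorphisms of `K`. -/
def regularMonos (K : Type u) [Category.{v} K] : MorphismProperty K :=
  fun _ _ f => Nonempty (RegularMono f)

/-- `K` is coregular: finitely cocomplete, with equalizers of cokernel pairs, and
regular monomorphisms are stable under pushouts. -/
structure IsCoregular (K : Type u) [Category.{v} K] : Prop where
  hasFiniteColimits : HasFiniteColimits K
  hasEqualizersOfCokernelPairs : ∀ ⦃A B : K⦄ (f : A ⟶ B) (P : K) (i₁ i₂ : B ⟶ P),
    IsPushout f f i₁ i₂ → HasEqualizer i₁ i₂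
  pushoutStable : ∀ ⦃A B C D : K⦄ (f : A ⟶ B) (u : A ⟶ C) (g : C ⟶ D) (v : B ⟶ D),
    IsPushout u f g v → Nonempty (RegularMono f) → Nonempty (RegularMono g)

section GoodDiagrams

variable {P : Type v} [PartialOrder P]

/-- A good poset: well-founded with a least element. -/
def IsGoodPoset (P : Type v) [PartialOrder P] : Prop :=
  WellFoundedLT P ∧ ∃ b : P, ∀ x : P, b ≤ x

/-- A `κ`-good poset: good, and every initial segment `↓x` has cardinality `< κ`. -/
def IsKappaGoodPoset (P : Type v) [PartialOrder P] (κ : Cardinal.{v}) : Prop :=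
  IsGoodPoset P ∧ ∀ x : P, Cardinal.mk (Set.Iic x) < κ

/-- `x` is isolated: `{y | y < x}` has a top element (the predecessor of `x`). -/
def IsIsolatedElem (x : P) : Prop := ∃ y : P, y < x ∧ ∀ z : P, z < x → z ≤ y

/-- A diagram over a good poset is smooth: at every limit element `x` (neither least
nor isolated) the canonical cocone on the restriction to `{y | y < x}` is a colimit. -/
def IsSmoothGoodDiagram (D : P ⥤ K) : Prop :=
  ∀ x : P, ¬ (∀ y : P, x ≤ y) → ¬ IsIsolatedElem x →
    Nonempty (IsColimit (subCocone D (Set.Iio x) x (fun q => le_of_lt q.2)))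

/-- The links of `D` (the morphisms `D (x⁻ → x)` for isolated `x`) lie in `X`. -/
def HasLinksIn (D : P ⥤ K) (X : MorphismProperty K) : Prop :=
  ∀ (x y : P) (h : y < x), (∀ z : P, z < x → z ≤ y) → X (D.map (homOfLE h.le))

/-- For every subset `Q` of cardinality `< κ` the colimit of the restriction of `D`
to `Q` is realized as some `D x`, via the morphisms of `D`. -/
def SmallSubcolimitsRealized (D : P ⥤ K) (κ : Cardinal.{v}) : Prop :=
  ∀ Q : Set P, Cardinal.mk Q < κ →
    ∃ (x : P) (hx : ∀ q : Q, (q : P) ≤ x), Nonempty (IsColimit (subCocone D Q x hx))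

end GoodDiagrams

end Paper

open CategoryTheory CategoryTheory.Limits Paper

/-- The category `Ban` of Banach spaces (over `ℝ`) with linear operators of norm at
most `1` as morphisms. -/
structure Ban : Type 1 where
  carrier : Type
  [isNormedAddCommGroup : NormedAddCommGroup carrier]
  [isNormedSpace : NormedSpace ℝ carrier]
  [isCompleteSpace : CompleteSpace carrier]

attribute [instance] Ban.isNormedAddCommGroup Ban.isNormedSpace Ban.isCompleteSpace

instance : CoeSort Ban Type := ⟨Ban.carrier⟩

instance : Category.{0} Ban where
  Hom X Y := { f : X →L[ℝ] Y // ‖f‖ ≤ 1 }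
  id X := ⟨ContinuousLinearMap.id ℝ X, ContinuousLinearMap.norm_id_le⟩
  comp {X Y Z} f g := ⟨g.1.comp f.1,
    le_trans (ContinuousLinearMap.opNorm_comp_le g.1 f.1)
      (by nlinarith [g.2, f.2, norm_nonneg f.1, norm_nonneg g.1])⟩
  id_comp f := Subtype.ext (by ext x; rfl)
  comp_id f := Subtype.ext (by ext x; rfl)
  assoc f g h := Subtype.ext (by ext x; rfl)

/-- The class of isometries in `Ban`. -/
def banIsometries : MorphismProperty Ban := fun _ _ f => Isometry f.1

/-- The density character of a topological space: the least cardinality of a dense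
subset. -/
noncomputable def densityCharacter (X : Type) [TopologicalSpace X] : Cardinal.{0} :=
  ⨅ s : { s : Set X // Dense s }, Cardinal.mk ↥(s : Set X)

/-- The class of isometries between separable Banach spaces. -/
def banSepIsometries : MorphismProperty Ban := fun A B f =>
  Isometry f.1 ∧ TopologicalSpace.SeparableSpace ↥A ∧ TopologicalSpace.SeparableSpace ↥B

/-- The class `M_λ` of isometries between `λ`-presentable Banach spaces. -/
def banIsometriesPres (lam : Cardinal.{0}) : MorphismProperty Ban := fun A B f =>
  Isometry f.1 ∧ IsPresentable lam A ∧ IsPresentable lam B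

/-! In `Ban` a cobase change `f` of an isometry `s` along `u` is again an isometry: a norming
functional of `x` composed with `u` extends along `s` by Hahn–Banach, and the two functionals
induce a contraction out of the pushout taking `f x` to `‖x‖`. Hence `f` restricts to an
isometry from the closure of `u(C)` to the closure of `v(D)`, both separable. The new square is
again a pushout: its cocones are those of the old square because `D` has dense image in the
closure of `v(D)`, so that `D ⟶ closure v(D)` is an epimorphism. -/

theorem CategoryTheory.IsPushout.of_left_of_epi {C : Type*} [Category C]
    {X₁₁ X₁₂ X₁₃ X₂₁ X₂₂ X₂₃ : C} {h₁₁ : X₁₁ ⟶ X₁₂} {h₁₂ : X₁₂ ⟶ X₁₃} {h₂₁ : X₂₁ ⟶ X₂₂}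
    {h₂₂ : X₂₂ ⟶ X₂₃} {v₁₁ : X₁₁ ⟶ X₂₁} {v₁₂ : X₁₂ ⟶ X₂₂} {v₁₃ : X₁₃ ⟶ X₂₃}
    (s : IsPushout (h₁₁ ≫ h₁₂) v₁₁ v₁₃ (h₂₁ ≫ h₂₂)) (p : h₁₂ ≫ v₁₃ = v₁₂ ≫ h₂₂)
    (q : h₁₁ ≫ v₁₂ = v₁₁ ≫ h₂₁) [Epi h₂₁] : IsPushout h₁₂ v₁₂ v₁₃ h₂₂ := by
  refine .of_isColimit' ⟨p⟩ <| PushoutCocone.IsColimit.mk p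
    (fun c => s.desc c.inl (h₂₁ ≫ c.inr) (by simp [c.condition, reassoc_of% q]))
    (fun c => s.inl_desc _ _ _) (fun c => ?_) (fun c m hl hr => ?_)
  · rw [← cancel_epi h₂₁, ← Category.assoc, s.inr_desc]
  · refine s.hom_ext (by simpa using hl) ?_
    simp [hr]

theorem exists_extension_norm_eq_of_linearIsometry {𝕜 E F : Type*} [RCLike 𝕜]
    [NormedAddCommGroup E] [NormedSpace 𝕜 E] [NormedAddCommGroup F] [NormedSpace 𝕜 F]
    (s : E →ₗᵢ[𝕜] F) (ℓ : StrongDual 𝕜 E) :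
    ∃ g : StrongDual 𝕜 F, g.comp s.toContinuousLinearMap = ℓ ∧ ‖g‖ = ‖ℓ‖ := by
  let e := s.equivRange
  obtain ⟨g, hg, hnorm⟩ :=
    exists_extension_norm_eq _ (ℓ.comp e.symm.toLinearIsometry.toContinuousLinearMap)
  refine ⟨g, ?_, ?_⟩
  · ext x
    simpa [e] using hg (e x)
  · rw [hnorm]
    exact ℓ.opNorm_comp_linearIsometryEquiv e.symm

namespace Ban

variable {X Y Z : Ban}

@[ext] lemma hom_ext {g h : X ⟶ Y} (H : ∀ x, g.1 x = h.1 x) : g = h :=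
  Subtype.ext (ContinuousLinearMap.ext H)

lemma comp_apply (g : X ⟶ Y) (h : Y ⟶ Z) (x : X) : (g ≫ h).1 x = h.1 (g.1 x) := rfl

lemma hom_congr_apply {g h : X ⟶ Y} (e : g = h) (x : X) : g.1 x = h.1 x := by
  rw [e]

lemma norm_map_le (g : X ⟶ Y) (x : X) : ‖g.1 x‖ ≤ ‖x‖ := by
  simpa using g.1.le_of_opNorm_le g.2 x

noncomputable def ofContractive (g : X →L[ℝ] Y) (hg : ∀ x, ‖g x‖ ≤ ‖x‖) : X ⟶ Y :=
  ⟨g, g.opNorm_le_bound zero_le_one fun x => by simpa using hg x⟩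

theorem isometry_of_isPushout {C D A B : Ban} {u : C ⟶ A} {s : C ⟶ D} {f : A ⟶ B}
    {v : D ⟶ B} (hp : IsPushout u s f v) (hs : Isometry s.1) : Isometry f.1 := by
  refine AddMonoidHomClass.isometry_of_norm f.1 fun x => le_antisymm (norm_map_le f x) ?_
  obtain ⟨φ, hφ, hφx⟩ := exists_dual_vector'' ℝ x
  let sₗᵢ : C →ₗᵢ[ℝ] D := ⟨s.1.toLinearMap, hs.norm_map_of_map_zero (map_zero _)⟩
  obtain ⟨ψ, hψs, hψ⟩ := exists_extension_norm_eq_of_linearIsometry sₗᵢ (φ.comp u.1)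
  have hψ_le : ‖ψ‖ ≤ 1 := hψ ▸ (φ.opNorm_comp_le u.1).trans (mul_le_one₀ hφ (norm_nonneg _) u.2)
  let R : Ban := ⟨ℝ⟩
  let t : B ⟶ R := hp.desc ⟨φ, hφ⟩ ⟨ψ, hψ_le⟩ (Subtype.ext hψs.symm)
  calc ‖x‖ = t.1 (f.1 x) := by
        rw [← comp_apply, hp.inl_desc]
        exact hφx.symm
    _ ≤ ‖f.1 x‖ := (le_abs_self _).trans (norm_map_le t _)

lemma epi_of_denseRange (g : X ⟶ Y) (hg : DenseRange g.1) : Epi g :=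
  ⟨fun h k e => hom_ext <| congrFun <|
    hg.equalizer h.1.continuous k.1.continuous (funext (hom_congr_apply e))⟩

noncomputable def topologicalClosure (p : Submodule ℝ X) : Ban := ⟨p.topologicalClosure⟩

noncomputable def closureι (p : Submodule ℝ X) : topologicalClosure p ⟶ X :=
  ofContractive p.topologicalClosure.subtypeL fun _ => le_rfl

lemma isometry_closureι (p : Submodule ℝ X) : Isometry (closureι p).1 := isometry_subtype_coe

noncomputable def codRestrict (g : X ⟶ Y) (p : Submodule ℝ Y)
    (h : ∀ x, g.1 x ∈ p.topologicalClosure) : X ⟶ topologicalClosure p :=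
  ofContractive (g.1.codRestrict _ h) (norm_map_le g)

lemma codRestrict_comp_closureι (g : X ⟶ Y) (p : Submodule ℝ Y)
    (h : ∀ x, g.1 x ∈ p.topologicalClosure) : codRestrict g p h ≫ closureι p = g := rfl

lemma isometry_codRestrict {g : X ⟶ Y} (hg : Isometry g.1) (p : Submodule ℝ Y)
    (h : ∀ x, g.1 x ∈ p.topologicalClosure) : Isometry (codRestrict g p h).1 :=
  fun x y => hg x y

abbrev range (g : X ⟶ Y) : Submodule ℝ Y := LinearMap.range (g.1 : X →ₗ[ℝ] Y)

lemma apply_mem_topologicalClosure_range (g : X ⟶ Y) (x : X) :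
    g.1 x ∈ (range g).topologicalClosure :=
  (range g).le_topologicalClosure (LinearMap.mem_range_self _ x)

noncomputable def rangeRestrict (g : X ⟶ Y) : X ⟶ topologicalClosure (range g) :=
  codRestrict g _ (apply_mem_topologicalClosure_range g)

instance epi_rangeRestrict (g : X ⟶ Y) : Epi (rangeRestrict g) := by
  have hdense : DenseRange (Set.codRestrict g.1 (range g).topologicalClosure
      (apply_mem_topologicalClosure_range g)) := fun y => by
    rw [Topology.IsInducing.subtypeVal.closure_eq_preimage_closure_image, Set.mem_preimage,
      ← Set.range_comp]
    exact y.2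
  exact epi_of_denseRange _ hdense

lemma separableSpace_topologicalClosure_range [TopologicalSpace.SeparableSpace X] (g : X ⟶ Y) :
    TopologicalSpace.SeparableSpace (topologicalClosure (range g)) :=
  (TopologicalSpace.isSeparable_range g.1.continuous).closure.separableSpace

end Ban

/-- in `Ban`, every pushout of an isometry between separable Banach
spaces is a pushout of an isometry between separable Banach spaces along an isometry. -/
theorem ban_po_along_isometry
    {A B : Ban} (f : A ⟶ B) (hf : Po banSepIsometries f) :
    ∃ (C D : Ban) (u : C ⟶ A) (s : C ⟶ D) (v : D ⟶ B),
      banSepIsometries s ∧ Isometry u.1 ∧ IsPushout u s f v := by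
  obtain ⟨C, D, u, s, v, ⟨hs, _, _⟩, hp⟩ := hf
  have hmaps :
      ∀ x, f.1 ((Ban.closureι (Ban.range u)).1 x) ∈ (Ban.range v).topologicalClosure := by
    refine fun x => map_mem_closure f.1.continuous x.2 ?_
    rintro _ ⟨c, rfl⟩
    exact ⟨s.1 c, (Ban.hom_congr_apply hp.w c).symm⟩
  let s' := Ban.codRestrict (Ban.closureι (Ban.range u) ≫ f) (Ban.range v) hmaps
  have hf' : Isometry (Ban.closureι (Ban.range u) ≫ f).1 :=
    (Ban.isometry_of_isPushout hp hs).comp (Ban.isometry_closureι _)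
  refine ⟨_, _, Ban.closureι _, s', Ban.closureι _, ⟨Ban.isometry_codRestrict hf' _ _,
    Ban.separableSpace_topologicalClosure_range u, Ban.separableSpace_topologicalClosure_range v⟩,
    Ban.isometry_closureι _, ?_⟩
  refine hp.of_left_of_epi (h₁₁ := Ban.rangeRestrict u) (h₂₁ := Ban.rangeRestrict v)
    (Ban.codRestrict_comp_closureι _ _ _).symm ?_
  ext c
  exact Subtype.ext (Ban.hom_congr_apply hp.w c)
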